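/- Rodrigues' formula: for every nonzero vector x ∈ ℝ³ with ω = ‖x‖, the matrix exponential of its hat matrix satisfies exp(x̂) = I + (sin ω / ω) x̂ + ((1 − cos ω)/ω²) x̂². -/

import Mathlib

/-! Since `x̂³ = -‖x‖² x̂`, every power `x̂ⁿ` with `n ≥ 1` is a scalar multiple of `x̂` (`n` odd) or of
`x̂²` (`n` even). Splitting the exponential series into its odd and even terms, the coefficients of
`x̂` and `x̂²` are the power series of `sin ω / ω` and `(1 - cos ω) / ω²`. -/

open Matrix Real

noncomputable section

/-- The hat map sending `x ∈ ℝ³` to the skew-symmetric matrix `x̂` with `x̂ y = x × y`. -/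
def hat (x : EuclideanSpace ℝ (Fin 3)) : Matrix (Fin 3) (Fin 3) ℝ :=
  !![0, -x 2, x 1; x 2, 0, -x 0; -x 1, x 0, 0]

open scoped Nat

theorem Real.hasSum_sin_div {ω : ℝ} (hω : ω ≠ 0) :
    HasSum (fun k : ℕ => (-1) ^ k * ω ^ (2 * k) / (2 * k + 1)!) (sin ω / ω) := by
  have hterm : ∀ k : ℕ, (-1) ^ k * ω ^ (2 * k) / (2 * k + 1)! =
      (-1) ^ k * ω ^ (2 * k + 1) / (2 * k + 1)! / ω := fun k => by
    field_simp
    ring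
  simpa only [hterm] using (hasSum_sin ω).div_const ω

theorem Real.hasSum_one_sub_cos_div_sq {ω : ℝ} (hω : ω ≠ 0) :
    HasSum (fun k : ℕ => (-1) ^ k * ω ^ (2 * k) / (2 * k + 2)!) ((1 - cos ω) / ω ^ 2) := by
  have htail := ((hasSum_nat_add_iff' 1).mpr (hasSum_cos ω)).div_const (-ω ^ 2)
  have hterm : ∀ k : ℕ, (-1) ^ k * ω ^ (2 * k) / (2 * k + 2)! =
      (-1) ^ (k + 1) * ω ^ (2 * (k + 1)) / (2 * (k + 1))! / -ω ^ 2 := fun k => by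
    field_simp
    ring_nf
  have hsum : (1 - cos ω) / ω ^ 2 = (cos ω - ∑ i ∈ Finset.range 1,
      (-1) ^ i * ω ^ (2 * i) / (2 * i)!) / -ω ^ 2 := by
    simp only [Finset.sum_range_one, pow_zero, mul_zero, Nat.factorial_zero, Nat.cast_one, div_one]
    field_simp
    ring
  simpa only [hterm, hsum] using htail

section PowThree

variable {𝔸 : Type*} [Ring 𝔸] [Algebra ℝ 𝔸] {A : 𝔸} {ω : ℝ}

theorem pow_two_mul_add_one_of_pow_three_eq (hA : A ^ 3 = -ω ^ 2 • A) (k : ℕ) :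
    A ^ (2 * k + 1) = ((-1) ^ k * ω ^ (2 * k)) • A := by
  induction k with
  | zero => simp
  | succ k ih =>
    calc A ^ (2 * (k + 1) + 1) = A ^ (2 * k + 1) * A ^ 2 := by rw [← pow_add]; congr 1
      _ = ((-1) ^ k * ω ^ (2 * k)) • A ^ 3 := by rw [ih, smul_mul_assoc, ← pow_succ']
      _ = ((-1) ^ (k + 1) * ω ^ (2 * (k + 1))) • A := by rw [hA, smul_smul]; ring_nf

theorem pow_two_mul_add_two_of_pow_three_eq (hA : A ^ 3 = -ω ^ 2 • A) (k : ℕ) :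
    A ^ (2 * k + 2) = ((-1) ^ k * ω ^ (2 * k)) • A ^ 2 := by
  rw [pow_succ, pow_two_mul_add_one_of_pow_three_eq hA, smul_mul_assoc, ← sq]

theorem NormedSpace.exp_eq_of_pow_three_eq [TopologicalSpace 𝔸] [IsTopologicalRing 𝔸]
    [ContinuousSMul ℝ 𝔸] [T2Space 𝔸] (hA : A ^ 3 = -ω ^ 2 • A) (hω : ω ≠ 0) :
    exp A = 1 + (sin ω / ω) • A + ((1 - cos ω) / ω ^ 2) • A ^ 2 := by
  rw [exp_eq_tsum ℝ, add_right_comm]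
  refine HasSum.tsum_eq (HasSum.even_add_odd (f := fun n => (n !⁻¹ : ℝ) • A ^ n) ?even ?odd)
  case even =>
    have htail : HasSum (fun k => ((2 * k + 2)! ⁻¹ : ℝ) • A ^ (2 * k + 2))
        (((1 - cos ω) / ω ^ 2) • A ^ 2) := by
      simpa only [pow_two_mul_add_two_of_pow_three_eq hA, smul_smul, div_eq_inv_mul]
        using (hasSum_one_sub_cos_div_sq hω).smul_const (A ^ 2)
    simpa using HasSum.zero_add (f := fun k => ((2 * k)! ⁻¹ : ℝ) • A ^ (2 * k))
      (by simpa only [mul_add, mul_one] using htail)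
  case odd =>
    simpa only [pow_two_mul_add_one_of_pow_three_eq hA, smul_smul, div_eq_inv_mul]
      using (hasSum_sin_div hω).smul_const A

end PowThree

theorem hat_pow_three (x : EuclideanSpace ℝ (Fin 3)) : hat x ^ 3 = -‖x‖ ^ 2 • hat x := by
  rw [EuclideanSpace.real_norm_sq_eq, Fin.sum_univ_three]
  ext i j
  fin_cases i <;> fin_cases j <;>
    simp [hat, pow_succ, Matrix.mul_apply, Fin.sum_univ_three] <;> ring

/-- Rodrigues' formula: for `x ≠ 0` with `ω = ‖x‖`,
`exp(x̂) = I + (sin ω / ω) x̂ + ((1 − cos ω)/ω²) x̂²`. -/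
theorem rodrigues (x : EuclideanSpace ℝ (Fin 3)) (hx : x ≠ 0) :
    NormedSpace.exp (hat x)
      = 1 + (Real.sin ‖x‖ / ‖x‖) • hat x
        + ((1 - Real.cos ‖x‖) / ‖x‖ ^ 2) • hat x ^ 2 :=
  NormedSpace.exp_eq_of_pow_three_eq (hat_pow_three x) (norm_ne_zero_iff.mpr hx)
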